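/- (Adjoint duality for flows.) Assume P^s, P^u, P^c are continuous on K and let ρ be a φ-invariant Borel probability measure on K. Let ω be a continuous covector field on K, ψ : K → ℝ continuous with d/dt ψ(φ^t x) = ω(φ^t x)(F(φ^t x)) along every orbit in K, and X a continuous vector field on K. Let (v, η) be the specific shadowing pair given by P^c(x)X(x) = η(x)F(x) and v(x) := ∫₀^∞ Dφ^t(φ^{-t}x) P^s(φ^{-t}x) X(φ^{-t}x) dt − ∫₀^∞ Dφ^{-t}(φ^{t}x) P^u(φ^{t}x) X(φ^{t}x) dt, and let ν := 𝒮(ω,ψ) where 𝒮(ω,ψ)(x) := ∫₀^∞ ω(φ^t x) ∘ P^s(φ^t x) ∘ Dφ^t(x) dt − ∫₀^∞ ω(φ^{-t} x) ∘ P^u(φ^{-t} x) ∘ Dφ^{-t}(x) dt − ψ(x) ε^c(x). Then ∫_K ω(x)(v(x)) dρ − ∫_K η(x) ψ(x) dρ = ∫_K ν(x)(X(x)) dρ. -/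

import Mathlib

/-!
For each fixed time `t`, invariance of `ρ` under `φ^t` and the substitution `x = φ^t y` turn
`∫ ω (φ^t_* Y)` into `∫ (φ^t)^* ω (Y)`; equivariance of the splitting moves `P^s` past `Dφ^t`,
so `(φ^t)^* (ω ∘ P^s) (X) = (φ^t)^* ω (P^s X)`. Exponential contraction on `V^s`, continuity and
compactness of `K` bound every integrand by a multiple of `λ^t`, so Fubini exchanges the time and
space integrals. The unstable terms are the stable ones for the reversed flow `t ↦ φ^{-t}`, and the
central term is `ψ ε^c(X) = ψ η`.
-/

open Function Set MeasureTheory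

section Splitting

variable {R M N : Type*} [Ring R] [AddCommGroup M] [Module R M] [AddCommGroup N] [Module R N]

theorem proj_eq_of_add_add_eq {Vs Vu Vc : Submodule R M} {ps pu pc : M → M}
    (hp : ∀ v, ps v ∈ Vs ∧ pu v ∈ Vu ∧ pc v ∈ Vc ∧ ps v + pu v + pc v = v)
    (hdirect : ∀ vs ∈ Vs, ∀ vu ∈ Vu, ∀ vc ∈ Vc, vs + vu + vc = 0 → vs = 0 ∧ vu = 0 ∧ vc = 0)
    {w ws wu wc : M} (hs : ws ∈ Vs) (hu : wu ∈ Vu) (hc : wc ∈ Vc) (hw : ws + wu + wc = w) :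
    ps w = ws ∧ pu w = wu ∧ pc w = wc := by
  obtain ⟨hs', hu', hc', hsum⟩ := hp w
  have h0 : (ps w - ws) + (pu w - wu) + (pc w - wc) = 0 := by
    rw [← sub_eq_zero.mpr (hsum.trans hw.symm)]; abel
  obtain ⟨h1, h2, h3⟩ := hdirect _ (sub_mem hs' hs) _ (sub_mem hu' hu) _ (sub_mem hc' hc) h0
  exact ⟨sub_eq_zero.mp h1, sub_eq_zero.mp h2, sub_eq_zero.mp h3⟩

theorem proj_map_eq_map_proj {Vs Vu Vc : Submodule R M} {Ws Wu Wc : Submodule R N}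
    {ps pu pc : M → M} {qs qu qc : N → N}
    (hp : ∀ v, ps v ∈ Vs ∧ pu v ∈ Vu ∧ pc v ∈ Vc ∧ ps v + pu v + pc v = v)
    (hq : ∀ v, qs v ∈ Ws ∧ qu v ∈ Wu ∧ qc v ∈ Wc ∧ qs v + qu v + qc v = v)
    (hdirect : ∀ vs ∈ Ws, ∀ vu ∈ Wu, ∀ vc ∈ Wc, vs + vu + vc = 0 → vs = 0 ∧ vu = 0 ∧ vc = 0)
    (L : M →ₗ[R] N) (hs : Vs.map L ≤ Ws) (hu : Vu.map L ≤ Wu) (hc : Vc.map L ≤ Wc) (w : M) :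
    qs (L w) = L (ps w) ∧ qu (L w) = L (pu w) ∧ qc (L w) = L (pc w) := by
  obtain ⟨hsw, huw, hcw, hw⟩ := hp w
  exact proj_eq_of_add_add_eq hq hdirect (hs (Submodule.mem_map_of_mem hsw))
    (hu (Submodule.mem_map_of_mem huw)) (hc (Submodule.mem_map_of_mem hcw))
    (by rw [← map_add, ← map_add, hw])

theorem apply_eq_of_add_add_smul_eq {ε : M →ₗ[R] R} {Vs Vu : Submodule R M}
    (hs : ∀ v ∈ Vs, ε v = 0) (hu : ∀ v ∈ Vu, ε v = 0) {f ws wu w : M} {a : R} (hf : ε f = 1)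
    (hws : ws ∈ Vs) (hwu : wu ∈ Vu) (hw : ws + wu + a • f = w) : ε w = a := by
  rw [← hw, map_add, map_add, map_smul, hs ws hws, hu wu hwu, hf, smul_eq_mul, mul_one,
    zero_add, zero_add]

end Splitting

section Analysis

variable {E : Type*} [NormedAddCommGroup E] [NormedSpace ℝ E]

theorem ContinuousOn.of_smul_eq {α : Type*} [TopologicalSpace α] {s : Set α} {a : α → ℝ}
    {f g : α → E} (hg : ContinuousOn g s) (hf : ContinuousOn f s) (hf0 : ∀ x ∈ s, f x ≠ 0)
    (h : ∀ x ∈ s, g x = a x • f x) : ContinuousOn a s := by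
  intro x hx
  obtain ⟨ℓ, -, hℓ⟩ := exists_dual_vector ℝ (f x) (norm_ne_zero_iff.mpr (hf0 x hx))
  have hℓf : ContinuousWithinAt (fun y => ℓ (f y)) s x :=
    ℓ.continuous.continuousAt.comp_continuousWithinAt (hf x hx)
  have hℓg : ContinuousWithinAt (fun y => ℓ (g y)) s x :=
    ℓ.continuous.continuousAt.comp_continuousWithinAt (hg x hx)
  have hℓx : ℓ (f x) ≠ 0 := by rw [hℓ]; exact_mod_cast norm_ne_zero_iff.mpr (hf0 x hx)
  refine (hℓg.div hℓf hℓx).congr_of_eventuallyEq ?_ (by simp [h x hx, hℓx])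
  filter_upwards [hℓf.eventually_ne hℓx, self_mem_nhdsWithin] with y hy hys
  simp [h y hys, hy]

theorem ContinuousLinearMap.opNorm_comp_le_of_forall_mem {L P : E →L[ℝ] E} {V : Submodule ℝ E}
    (hP : ∀ w, P w ∈ V) {a : ℝ} (ha : 0 ≤ a) (hL : ∀ w ∈ V, ‖L w‖ ≤ a * ‖w‖) :
    ‖L.comp P‖ ≤ a * ‖P‖ :=
  L.comp P |>.opNorm_le_bound (by positivity) fun w =>
    (hL _ (hP w)).trans (by rw [mul_assoc]; gcongr; exact P.le_opNorm w)

theorem exists_opNorm_comp_le_rpow {K : Set E} (hK : IsCompact K) {P : E → E →L[ℝ] E}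
    (hP : ContinuousOn P K) {V : E → Submodule ℝ E} (hPV : ∀ x ∈ K, ∀ w, P x w ∈ V x)
    {D : ℝ → E → E →L[ℝ] E} {C lam : ℝ} (hC : 0 ≤ C) (hlam0 : 0 < lam)
    (hD : ∀ t, 0 ≤ t → ∀ x ∈ K, ∀ w ∈ V x, ‖D t x w‖ ≤ C * lam ^ t * ‖w‖) :
    ∃ c, ∀ t, 0 ≤ t → ∀ x ∈ K, ‖(D t x).comp (P x)‖ ≤ c * lam ^ t := by
  obtain ⟨M, hM⟩ := hK.exists_bound_of_continuousOn hP
  refine ⟨C * M, fun t ht x hx => ?_⟩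
  have hCt : 0 ≤ C * lam ^ t := by positivity
  calc ‖(D t x).comp (P x)‖ ≤ C * lam ^ t * ‖P x‖ :=
        ContinuousLinearMap.opNorm_comp_le_of_forall_mem (hPV x hx) hCt (hD t ht x hx)
    _ ≤ C * lam ^ t * M := by gcongr; exact hM x hx
    _ = C * M * lam ^ t := by ring

end Analysis

section Integrability

theorem integrableOn_Ioi_rpow_of_lt_one {lam : ℝ} (hlam0 : 0 < lam) (hlam1 : lam < 1) :
    IntegrableOn (fun t : ℝ => lam ^ t) (Ioi 0) :=
  (integrableOn_exp_mul_Ioi (Real.log_neg hlam0 hlam1) 0).congr_fun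
    (fun t _ => (Real.rpow_def_of_pos hlam0 t).symm) measurableSet_Ioi

variable {E α : Type*} [NormedAddCommGroup E] [TopologicalSpace α] {K : Set α} {c lam : ℝ}

theorem integrableOn_Ioi_of_continuousOn_prod {f : ℝ → α → E}
    (hf : ContinuousOn (uncurry f) (Ioi 0 ×ˢ K)) (hlam0 : 0 < lam) (hlam1 : lam < 1)
    (hle : ∀ t ∈ Ioi (0 : ℝ), ∀ x ∈ K, ‖f t x‖ ≤ c * lam ^ t) {x : α} (hx : x ∈ K) :
    IntegrableOn (fun t => f t x) (Ioi 0) :=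
  Integrable.mono' ((integrableOn_Ioi_rpow_of_lt_one hlam0 hlam1).const_mul c)
    ((hf.comp (Continuous.prodMk_left x).continuousOn fun _ ht => ⟨ht, hx⟩).aestronglyMeasurable
      measurableSet_Ioi)
    ((ae_restrict_mem measurableSet_Ioi).mono fun t ht => hle t ht x hx)

theorem integrable_prod_of_continuousOn [MeasurableSpace α] [OpensMeasurableSpace α]
    {μ : Measure α} [IsFiniteMeasure μ] (hK : MeasurableSet K) {f : ℝ → α → ℝ}
    (hf : ContinuousOn (uncurry f) (Ioi 0 ×ˢ K)) (hlam0 : 0 < lam) (hlam1 : lam < 1)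
    (hle : ∀ t ∈ Ioi (0 : ℝ), ∀ x ∈ K, ‖f t x‖ ≤ c * lam ^ t) :
    Integrable (uncurry f) ((volume.restrict (Ioi 0)).prod (μ.restrict K)) := by
  have hdom : Integrable (fun p : ℝ × α => c * lam ^ p.1)
      ((volume.restrict (Ioi 0)).prod (μ.restrict K)) :=
    ((integrableOn_Ioi_rpow_of_lt_one hlam0 hlam1).const_mul c).comp_fst _
  rw [Measure.prod_restrict] at hdom ⊢
  exact hdom.mono' (hf.aestronglyMeasurable (measurableSet_Ioi.prod hK))
    ((ae_restrict_mem (measurableSet_Ioi.prod hK)).mono fun p hp => hle p.1 hp.1 p.2 hp.2)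

end Integrability

section Fubini

variable {α : Type*} [TopologicalSpace α] [MeasurableSpace α] [OpensMeasurableSpace α]
  {μ : Measure α} [IsFiniteMeasure μ] {K : Set α} {c lam : ℝ}

theorem integrableOn_integral_Ioi (hK : MeasurableSet K) {f : ℝ → α → ℝ}
    (hf : ContinuousOn (uncurry f) (Ioi 0 ×ˢ K)) (hlam0 : 0 < lam) (hlam1 : lam < 1)
    (hle : ∀ t ∈ Ioi (0 : ℝ), ∀ x ∈ K, ‖f t x‖ ≤ c * lam ^ t) :
    IntegrableOn (fun x => ∫ t in Ioi 0, f t x) K μ :=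
  (integrable_prod_of_continuousOn hK hf hlam0 hlam1 hle).integral_prod_right

theorem setIntegral_integral_Ioi_swap (hK : MeasurableSet K) {f : ℝ → α → ℝ}
    (hf : ContinuousOn (uncurry f) (Ioi 0 ×ˢ K)) (hlam0 : 0 < lam) (hlam1 : lam < 1)
    (hle : ∀ t ∈ Ioi (0 : ℝ), ∀ x ∈ K, ‖f t x‖ ≤ c * lam ^ t) :
    ∫ x in K, (∫ t in Ioi 0, f t x) ∂μ = ∫ t in Ioi 0, ∫ x in K, f t x ∂μ :=
  (integral_integral_swap (integrable_prod_of_continuousOn hK hf hlam0 hlam1 hle)).symm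

end Fubini

section Flow

variable {E : Type*} [NormedAddCommGroup E] [NormedSpace ℝ E]

theorem continuousOn_flow {φ : ℝ → E → E} {F : E → E} {K : Set E} (hK : IsCompact K)
    (hF : ContinuousOn F K) (hφ : ∀ t, Continuous (φ t))
    (hode : ∀ x t, HasDerivAt (fun s => φ s x) (F (φ t x)) t) (hφK : ∀ t, MapsTo (φ t) K K) :
    ContinuousOn (fun p : ℝ × E => φ p.1 p.2) (univ ×ˢ K) := by
  obtain ⟨B, hB⟩ := hK.exists_bound_of_continuousOn hF
  refine continuousOn_prod_of_continuousOn_lipschitzOnWith _ B.toNNReal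
    (fun t _ => (hφ t).continuousOn) fun x hx => LipschitzWith.lipschitzOnWith ?_
  refine lipschitzWith_of_nnnorm_deriv_le (fun t => (hode x t).differentiableAt) fun t => ?_
  rw [(hode x t).deriv, ← NNReal.coe_le_coe, coe_nnnorm]
  exact (hB _ (hφK t hx)).trans (Real.le_coe_toNNReal B)

-- The paper's `v` and `𝒮(ω, ψ) + ψ ε^c` are differences of time integrals of these, for
-- `(φ, P^s)` and for the reversed flow `t ↦ φ (-t)` with `P^u`.
noncomputable def pushforward (ϕ : ℝ → E → E) (Y : E → E) (t : ℝ) (x : E) : E :=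
  fderiv ℝ (ϕ t) (ϕ (-t) x) (Y (ϕ (-t) x))

noncomputable def pullback (ϕ : ℝ → E → E) (α : E → E →L[ℝ] ℝ) (t : ℝ) (x : E) : E →L[ℝ] ℝ :=
  (α (ϕ t x)).comp (fderiv ℝ (ϕ t) x)

theorem pullback_comp_eq {ϕ : ℝ → E → E} {K : Set E} {P : E → E →L[ℝ] E}
    (hcomm : ∀ t, ∀ x ∈ K, ∀ w, P (ϕ t x) (fderiv ℝ (ϕ t) x w) = fderiv ℝ (ϕ t) x (P x w))
    (ω : E → E →L[ℝ] ℝ) (t : ℝ) {x : E} (hx : x ∈ K) :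
    pullback ϕ (fun y => (ω y).comp (P y)) t x = (pullback ϕ ω t x).comp (P x) :=
  ContinuousLinearMap.ext fun w => congrArg (ω (ϕ t x)) (hcomm t x hx w)

variable [MeasurableSpace E]

structure IsInvariantFlowOn (ϕ : ℝ → E → E) (K : Set E) (ρ : Measure E) : Prop where
  neg_apply_apply : ∀ t x, ϕ (-t) (ϕ t x) = x
  continuous : ∀ t, Continuous (ϕ t)
  continuousOn : ContinuousOn (fun p : ℝ × E => ϕ p.1 p.2) (univ ×ˢ K)
  continuous_fderiv : Continuous fun p : ℝ × E => fderiv ℝ (ϕ p.1) p.2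
  image_eq : ∀ t, ϕ t '' K = K
  measure_preimage : ∀ t A, MeasurableSet A → ρ (ϕ t ⁻¹' A) = ρ A

theorem isInvariantFlowOn_of_hasDerivAt {φ : ℝ → E → E} {F : E → E} {K : Set E}
    {ρ : Measure E} (hφ0 : ∀ x, φ 0 x = x) (hφadd : ∀ s t x, φ (s + t) x = φ s (φ t x))
    (hφ : ∀ t, Continuous (φ t)) (hode : ∀ x t, HasDerivAt (fun s => φ s x) (F (φ t x)) t)
    (hD : Continuous fun p : ℝ × E => fderiv ℝ (φ p.1) p.2) (hK : IsCompact K)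
    (hF : ContinuousOn F K) (hφK : ∀ t, φ t '' K = K)
    (hρ : ∀ t A, MeasurableSet A → ρ (φ t ⁻¹' A) = ρ A) : IsInvariantFlowOn φ K ρ where
  neg_apply_apply t x := by rw [← hφadd, neg_add_cancel, hφ0]
  continuous := hφ
  continuousOn := continuousOn_flow hK hF hφ hode fun t _ hx => hφK t ▸ mem_image_of_mem _ hx
  continuous_fderiv := hD
  image_eq := hφK
  measure_preimage := hρ

namespace IsInvariantFlowOn

variable {ϕ : ℝ → E → E} {K : Set E} {ρ : Measure E} {P : E → E →L[ℝ] E} {c lam : ℝ}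

theorem reverse (h : IsInvariantFlowOn ϕ K ρ) : IsInvariantFlowOn (fun t => ϕ (-t)) K ρ where
  neg_apply_apply t x := h.neg_apply_apply (-t) x
  continuous t := h.continuous (-t)
  continuousOn := h.continuousOn.comp (continuous_neg.prodMap continuous_id).continuousOn
    fun _ hp => ⟨trivial, hp.2⟩
  continuous_fderiv := h.continuous_fderiv.comp (continuous_neg.prodMap continuous_id)
  image_eq t := h.image_eq (-t)
  measure_preimage t := h.measure_preimage (-t)

theorem apply_neg_apply (h : IsInvariantFlowOn ϕ K ρ) (t : ℝ) (x : E) :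
    ϕ t (ϕ (-t) x) = x := by
  simpa using h.neg_apply_apply (-t) x

theorem mapsTo (h : IsInvariantFlowOn ϕ K ρ) (t : ℝ) : MapsTo (ϕ t) K K :=
  fun _ hx => h.image_eq t ▸ mem_image_of_mem (ϕ t) hx

theorem continuousOn_pushforward (h : IsInvariantFlowOn ϕ K ρ) {Y : E → E}
    (hY : ContinuousOn Y K) : ContinuousOn (uncurry (pushforward ϕ Y)) (univ ×ˢ K) :=
  (h.continuous_fderiv.comp_continuousOn (continuousOn_fst.prodMk h.reverse.continuousOn)).clm_apply
    (hY.comp h.reverse.continuousOn fun p hp => h.reverse.mapsTo p.1 hp.2)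

theorem continuousOn_pullback (h : IsInvariantFlowOn ϕ K ρ) {α : E → E →L[ℝ] ℝ}
    (hα : ContinuousOn α K) : ContinuousOn (uncurry (pullback ϕ α)) (univ ×ˢ K) :=
  (hα.comp h.continuousOn fun p hp => h.mapsTo p.1 hp.2).clm_comp h.continuous_fderiv.continuousOn

theorem norm_pushforward_le (h : IsInvariantFlowOn ϕ K ρ)
    (hdecay : ∀ t, 0 ≤ t → ∀ x ∈ K, ‖(fderiv ℝ (ϕ t) x).comp (P x)‖ ≤ c * lam ^ t)
    {X : E → E} {B : ℝ} (hB : ∀ x ∈ K, ‖X x‖ ≤ B) {t : ℝ} (ht : 0 ≤ t) {x : E} (hx : x ∈ K) :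
    ‖pushforward ϕ (fun y => P y (X y)) t x‖ ≤ c * B * lam ^ t := by
  have hy := h.reverse.mapsTo t hx
  calc ‖pushforward ϕ (fun y => P y (X y)) t x‖
      ≤ ‖(fderiv ℝ (ϕ t) (ϕ (-t) x)).comp (P (ϕ (-t) x))‖ * ‖X (ϕ (-t) x)‖ :=
        ((fderiv ℝ (ϕ t) (ϕ (-t) x)).comp (P (ϕ (-t) x))).le_opNorm _
    _ ≤ c * lam ^ t * B := mul_le_mul (hdecay t ht _ hy) (hB _ hy) (norm_nonneg _)
        ((norm_nonneg _).trans (hdecay t ht _ hy))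
    _ = c * B * lam ^ t := by ring

theorem norm_pullback_comp_le (h : IsInvariantFlowOn ϕ K ρ)
    (hcomm : ∀ t, ∀ x ∈ K, ∀ w, P (ϕ t x) (fderiv ℝ (ϕ t) x w) = fderiv ℝ (ϕ t) x (P x w))
    (hdecay : ∀ t, 0 ≤ t → ∀ x ∈ K, ‖(fderiv ℝ (ϕ t) x).comp (P x)‖ ≤ c * lam ^ t)
    {ω : E → E →L[ℝ] ℝ} {W : ℝ} (hW : ∀ x ∈ K, ‖ω x‖ ≤ W) {t : ℝ} (ht : 0 ≤ t) {x : E}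
    (hx : x ∈ K) : ‖pullback ϕ (fun y => (ω y).comp (P y)) t x‖ ≤ W * c * lam ^ t := by
  rw [pullback_comp_eq hcomm ω t hx, pullback, ContinuousLinearMap.comp_assoc, mul_assoc]
  exact (ContinuousLinearMap.opNorm_comp_le _ _).trans (mul_le_mul (hW _ (h.mapsTo t hx))
    (hdecay t ht x hx) (norm_nonneg _) ((norm_nonneg _).trans (hW _ (h.mapsTo t hx))))

variable [BorelSpace E]

theorem measurableEmbedding (h : IsInvariantFlowOn ϕ K ρ) (t : ℝ) : MeasurableEmbedding (ϕ t) :=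
  (Homeomorph.mk ⟨ϕ t, ϕ (-t), h.neg_apply_apply t, h.apply_neg_apply t⟩ (h.continuous t)
    (h.continuous (-t))).measurableEmbedding

theorem measurePreserving (h : IsInvariantFlowOn ϕ K ρ) (t : ℝ) :
    MeasurePreserving (ϕ t) (ρ.restrict K) (ρ.restrict K) := by
  have hρ : MeasurePreserving (ϕ t) ρ ρ := ⟨(h.continuous t).measurable, Measure.ext fun A hA => by
    rw [Measure.map_apply (h.continuous t).measurable hA, h.measure_preimage t A hA]⟩
  have hK : ϕ t ⁻¹' K = K := by
    conv_lhs => rw [← h.image_eq t]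
    exact preimage_image_eq K (h.measurableEmbedding t).injective
  simpa only [hK] using hρ.restrict_preimage_emb (h.measurableEmbedding t) K

theorem setIntegral_apply_pushforward (h : IsInvariantFlowOn ϕ K ρ) (t : ℝ)
    (ω : E → E →L[ℝ] ℝ) (Y : E → E) :
    ∫ x in K, ω x (pushforward ϕ Y t x) ∂ρ = ∫ x in K, pullback ϕ ω t x (Y x) ∂ρ := by
  rw [← (h.measurePreserving t).integral_comp (h.measurableEmbedding t)]
  simp only [pushforward, pullback, h.neg_apply_apply, ContinuousLinearMap.comp_apply]

variable [IsFiniteMeasure ρ]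


theorem setIntegral_apply_integral_pushforward_swap [CompleteSpace E] (h : IsInvariantFlowOn ϕ K ρ)
    (hK : IsCompact K) (hP : ContinuousOn P K) (hlam0 : 0 < lam) (hlam1 : lam < 1)
    (hdecay : ∀ t, 0 ≤ t → ∀ x ∈ K, ‖(fderiv ℝ (ϕ t) x).comp (P x)‖ ≤ c * lam ^ t)
    {ω : E → E →L[ℝ] ℝ} (hω : ContinuousOn ω K) {X : E → E} (hX : ContinuousOn X K) :
    IntegrableOn (fun x => ω x (∫ t in Ioi 0, pushforward ϕ (fun y => P y (X y)) t x)) K ρ ∧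
    ∫ x in K, ω x (∫ t in Ioi 0, pushforward ϕ (fun y => P y (X y)) t x) ∂ρ =
      ∫ t in Ioi 0, ∫ x in K, ω x (pushforward ϕ (fun y => P y (X y)) t x) ∂ρ := by
  obtain ⟨W, hW⟩ := hK.exists_bound_of_continuousOn hω
  obtain ⟨B, hB⟩ := hK.exists_bound_of_continuousOn hX
  have hKm := hK.measurableSet
  have hpush := (h.continuousOn_pushforward (hP.clm_apply hX)).mono
    (prod_mono_left (subset_univ (Ioi 0)))
  have hpush_le : ∀ t ∈ Ioi (0 : ℝ), ∀ x ∈ K,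
      ‖pushforward ϕ (fun y => P y (X y)) t x‖ ≤ c * B * lam ^ t := fun _ ht _ hx =>
    h.norm_pushforward_le hdecay hB (le_of_lt ht) hx
  have hf : ContinuousOn (uncurry fun t x => ω x (pushforward ϕ (fun y => P y (X y)) t x))
      (Ioi 0 ×ˢ K) := (hω.comp continuousOn_snd fun _ hp => hp.2).clm_apply hpush
  have hf_le : ∀ t ∈ Ioi (0 : ℝ), ∀ x ∈ K,
      ‖ω x (pushforward ϕ (fun y => P y (X y)) t x)‖ ≤ W * c * B * lam ^ t := fun t ht x hx =>
    ((ω x).le_opNorm _).trans <| (mul_le_mul (hW x hx) (hpush_le t ht x hx) (norm_nonneg _)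
      ((norm_nonneg _).trans (hW x hx))).trans_eq (by ring)
  have hf_eq : EqOn (fun x => ω x (∫ t in Ioi 0, pushforward ϕ (fun y => P y (X y)) t x))
      (fun x => ∫ t in Ioi 0, ω x (pushforward ϕ (fun y => P y (X y)) t x)) K := fun x hx =>
    ((ω x).integral_comp_comm
      (integrableOn_Ioi_of_continuousOn_prod hpush hlam0 hlam1 hpush_le hx)).symm
  exact ⟨(integrableOn_integral_Ioi hKm hf hlam0 hlam1 hf_le).congr_fun hf_eq.symm hKm,
    (setIntegral_congr_fun hKm hf_eq).trans
      (setIntegral_integral_Ioi_swap hKm hf hlam0 hlam1 hf_le)⟩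

theorem setIntegral_integral_pullback_apply_swap (h : IsInvariantFlowOn ϕ K ρ) (hK : IsCompact K)
    (hP : ContinuousOn P K)
    (hcomm : ∀ t, ∀ x ∈ K, ∀ w, P (ϕ t x) (fderiv ℝ (ϕ t) x w) = fderiv ℝ (ϕ t) x (P x w))
    (hlam0 : 0 < lam) (hlam1 : lam < 1)
    (hdecay : ∀ t, 0 ≤ t → ∀ x ∈ K, ‖(fderiv ℝ (ϕ t) x).comp (P x)‖ ≤ c * lam ^ t)
    {ω : E → E →L[ℝ] ℝ} (hω : ContinuousOn ω K) {X : E → E} (hX : ContinuousOn X K) :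
    IntegrableOn (fun x => (∫ t in Ioi 0, pullback ϕ (fun y => (ω y).comp (P y)) t x) (X x))
      K ρ ∧
    ∫ x in K, (∫ t in Ioi 0, pullback ϕ (fun y => (ω y).comp (P y)) t x) (X x) ∂ρ =
      ∫ t in Ioi 0, ∫ x in K, pullback ϕ (fun y => (ω y).comp (P y)) t x (X x) ∂ρ := by
  obtain ⟨W, hW⟩ := hK.exists_bound_of_continuousOn hω
  obtain ⟨B, hB⟩ := hK.exists_bound_of_continuousOn hX
  have hKm := hK.measurableSet
  have hpull := (h.continuousOn_pullback (hω.clm_comp hP)).mono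
    (prod_mono_left (subset_univ (Ioi 0)))
  have hpull_le : ∀ t ∈ Ioi (0 : ℝ), ∀ x ∈ K,
      ‖pullback ϕ (fun y => (ω y).comp (P y)) t x‖ ≤ W * c * lam ^ t := fun _ ht _ hx =>
    h.norm_pullback_comp_le hcomm hdecay hW (le_of_lt ht) hx
  have hg : ContinuousOn (uncurry fun t x => pullback ϕ (fun y => (ω y).comp (P y)) t x (X x))
      (Ioi 0 ×ˢ K) := hpull.clm_apply (hX.comp continuousOn_snd fun _ hp => hp.2)
  have hg_le : ∀ t ∈ Ioi (0 : ℝ), ∀ x ∈ K,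
      ‖pullback ϕ (fun y => (ω y).comp (P y)) t x (X x)‖ ≤ W * c * B * lam ^ t :=
    fun t ht x hx => (ContinuousLinearMap.le_opNorm _ _).trans <| (mul_le_mul (hpull_le t ht x hx)
      (hB x hx) (norm_nonneg _) ((norm_nonneg _).trans (hpull_le t ht x hx))).trans_eq (by ring)
  have hg_eq : EqOn (fun x => (∫ t in Ioi 0, pullback ϕ (fun y => (ω y).comp (P y)) t x) (X x))
      (fun x => ∫ t in Ioi 0, pullback ϕ (fun y => (ω y).comp (P y)) t x (X x)) K := fun x hx =>
    ContinuousLinearMap.integral_apply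
      (integrableOn_Ioi_of_continuousOn_prod hpull hlam0 hlam1 hpull_le hx) (X x)
  exact ⟨(integrableOn_integral_Ioi hKm hg hlam0 hlam1 hg_le).congr_fun hg_eq.symm hKm,
    (setIntegral_congr_fun hKm hg_eq).trans
      (setIntegral_integral_Ioi_swap hKm hg hlam0 hlam1 hg_le)⟩

theorem setIntegral_apply_integral_pushforward_eq [CompleteSpace E] (h : IsInvariantFlowOn ϕ K ρ)
    (hK : IsCompact K) (hP : ContinuousOn P K)
    (hcomm : ∀ t, ∀ x ∈ K, ∀ w, P (ϕ t x) (fderiv ℝ (ϕ t) x w) = fderiv ℝ (ϕ t) x (P x w))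
    {V : E → Submodule ℝ E} (hPV : ∀ x ∈ K, ∀ w, P x w ∈ V x) {C : ℝ} (hC : 0 ≤ C)
    (hlam0 : 0 < lam) (hlam1 : lam < 1)
    (hdecay : ∀ t, 0 ≤ t → ∀ x ∈ K, ∀ w ∈ V x, ‖fderiv ℝ (ϕ t) x w‖ ≤ C * lam ^ t * ‖w‖)
    {ω : E → E →L[ℝ] ℝ} (hω : ContinuousOn ω K) {X : E → E} (hX : ContinuousOn X K) :
    IntegrableOn (fun x => ω x (∫ t in Ioi 0, pushforward ϕ (fun y => P y (X y)) t x)) K ρ ∧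
    IntegrableOn (fun x => (∫ t in Ioi 0, pullback ϕ (fun y => (ω y).comp (P y)) t x) (X x))
      K ρ ∧
    ∫ x in K, ω x (∫ t in Ioi 0, pushforward ϕ (fun y => P y (X y)) t x) ∂ρ =
      ∫ x in K, (∫ t in Ioi 0, pullback ϕ (fun y => (ω y).comp (P y)) t x) (X x) ∂ρ := by
  obtain ⟨c, hc⟩ := exists_opNorm_comp_le_rpow hK hP hPV hC hlam0 hdecay
  obtain ⟨hpush, hpush_eq⟩ :=
    h.setIntegral_apply_integral_pushforward_swap hK hP hlam0 hlam1 hc hω hX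
  obtain ⟨hpull, hpull_eq⟩ :=
    h.setIntegral_integral_pullback_apply_swap hK hP hcomm hlam0 hlam1 hc hω hX
  refine ⟨hpush, hpull, hpush_eq.trans (Eq.trans ?_ hpull_eq.symm)⟩
  refine integral_congr_ae (ae_of_all _ fun t => (h.setIntegral_apply_pushforward t ω _).trans ?_)
  exact setIntegral_congr_fun hK.measurableSet fun x hx => by
    rw [pullback_comp_eq hcomm ω t hx]; rfl

end IsInvariantFlowOn

end Flow

theorem adjoint_duality_flow_general
    {E : Type*} [NormedAddCommGroup E] [NormedSpace ℝ E] [FiniteDimensional ℝ E]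
    (F : E → E) (hF : ContDiff ℝ 2 F)
    (φ : ℝ → E → E)
    (hφ0 : ∀ x : E, φ 0 x = x)
    (hφadd : ∀ (s t : ℝ) (x : E), φ (s + t) x = φ s (φ t x))
    (hφode : ∀ (x : E) (t : ℝ), HasDerivAt (fun s => φ s x) (F (φ t x)) t)
    (hφC1 : ∀ t : ℝ, ContDiff ℝ 1 (φ t))
    (hφD : Continuous fun p : ℝ × E => fderiv ℝ (φ p.1) p.2)
    (K : Set E) (hKc : IsCompact K) (hφK : ∀ t : ℝ, φ t '' K = K)
    (hFne : ∀ x ∈ K, F x ≠ 0)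
    (Vs Vu Vc : E → Submodule ℝ E)
    (hequivs : ∀ (t : ℝ), ∀ x ∈ K, (Vs x).map (fderiv ℝ (φ t) x : E →ₗ[ℝ] E) = Vs (φ t x))
    (hequivu : ∀ (t : ℝ), ∀ x ∈ K, (Vu x).map (fderiv ℝ (φ t) x : E →ₗ[ℝ] E) = Vu (φ t x))
    (hequivc : ∀ (t : ℝ), ∀ x ∈ K, (Vc x).map (fderiv ℝ (φ t) x : E →ₗ[ℝ] E) = Vc (φ t x))
    (C lam : ℝ) (hC : 0 < C) (hlam0 : 0 < lam) (hlam1 : lam < 1)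
    (hyps : ∀ t : ℝ, 0 ≤ t → ∀ x ∈ K, ∀ v ∈ Vs x, ‖fderiv ℝ (φ t) x v‖ ≤ C * lam ^ t * ‖v‖)
    (hypu : ∀ t : ℝ, 0 ≤ t → ∀ x ∈ K, ∀ v ∈ Vu x, ‖fderiv ℝ (φ (-t)) x v‖ ≤ C * lam ^ t * ‖v‖)
    (Ps Pu Pc : E → E →L[ℝ] E)
    (hproj : ∀ x ∈ K, ∀ v : E, Ps x v ∈ Vs x ∧ Pu x v ∈ Vu x ∧ Pc x v ∈ Vc x ∧
      Ps x v + Pu x v + Pc x v = v)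
    (hdirect : ∀ x ∈ K, ∀ vs ∈ Vs x, ∀ vu ∈ Vu x, ∀ vc ∈ Vc x,
      vs + vu + vc = 0 → vs = 0 ∧ vu = 0 ∧ vc = 0)
    (εc : E → E →L[ℝ] ℝ)
    (hεc : ∀ x ∈ K, (∀ v ∈ Vs x, εc x v = 0) ∧ (∀ v ∈ Vu x, εc x v = 0) ∧ εc x (F x) = 1)
    [MeasurableSpace E] [BorelSpace E]
    (ρ : Measure E) [IsProbabilityMeasure ρ]
    (hρinv : ∀ (t : ℝ) (A : Set E), MeasurableSet A → ρ (φ t ⁻¹' A) = ρ A)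
    (hPsc : ContinuousOn Ps K) (hPuc : ContinuousOn Pu K) (hPcc : ContinuousOn Pc K)
    (ω : E → E →L[ℝ] ℝ) (hωc : ContinuousOn ω K)
    (ψ : E → ℝ) (hψc : ContinuousOn ψ K)
    (X : E → E) (hXc : ContinuousOn X K)
    (η : E → ℝ) (hη : ∀ x ∈ K, Pc x (X x) = η x • F x)
    (v : E → E)
    (hv : ∀ x ∈ K, v x =
      (∫ t in Ioi (0:ℝ), fderiv ℝ (φ t) (φ (-t) x) (Ps (φ (-t) x) (X (φ (-t) x)))) -
      ∫ t in Ioi (0:ℝ), fderiv ℝ (φ (-t)) (φ t x) (Pu (φ t x) (X (φ t x))))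
    (ν : E → E →L[ℝ] ℝ)
    (hν : ∀ x ∈ K, ν x =
      (∫ t in Ioi (0:ℝ), ((ω (φ t x)).comp (Ps (φ t x))).comp (fderiv ℝ (φ t) x)) -
      (∫ t in Ioi (0:ℝ), ((ω (φ (-t) x)).comp (Pu (φ (-t) x))).comp (fderiv ℝ (φ (-t)) x)) -
      ψ x • εc x) :
    (∫ x in K, ω x (v x) ∂ρ) - (∫ x in K, η x * ψ x ∂ρ) = ∫ x in K, ν x (X x) ∂ρ := by
  have hflow : IsInvariantFlowOn φ K ρ := isInvariantFlowOn_of_hasDerivAt hφ0 hφadd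
    (fun t => (hφC1 t).continuous) hφode hφD hKc hF.continuous.continuousOn hφK hρinv
  have hcomm := fun t x (hx : x ∈ K) => proj_map_eq_map_proj (hproj x hx)
    (hproj _ (hflow.mapsTo t hx)) (hdirect _ (hflow.mapsTo t hx)) (fderiv ℝ (φ t) x : E →ₗ[ℝ] E)
    (hequivs t x hx).le (hequivu t x hx).le (hequivc t x hx).le
  obtain ⟨hAs, hBs, hs⟩ := hflow.setIntegral_apply_integral_pushforward_eq hKc hPsc
    (fun t x hx w => (hcomm t x hx w).1) (fun x hx w => (hproj x hx w).1) hC.le hlam0 hlam1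
    hyps hωc hXc
  obtain ⟨hAu, hBu, hu⟩ := hflow.reverse.setIntegral_apply_integral_pushforward_eq hKc hPuc
    (fun t x hx w => (hcomm (-t) x hx w).2.1) (fun x hx w => (hproj x hx w).2.1) hC.le hlam0
    hlam1 hypu hωc hXc
  have hηc : ContinuousOn η K := (hPcc.clm_apply hXc).of_smul_eq hF.continuous.continuousOn hFne hη
  have hηψ : IntegrableOn (fun x => η x * ψ x) K ρ := (hηc.mul hψc).integrableOn_compact hKc
  have hv' : EqOn (fun x => ω x (v x)) (fun x =>
      ω x (∫ t in Ioi 0, pushforward φ (fun y => Ps y (X y)) t x) -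
      ω x (∫ t in Ioi 0, pushforward (fun t => φ (-t)) (fun y => Pu y (X y)) t x)) K := by
    intro x hx
    simp only [hv x hx, pushforward, neg_neg, map_sub]
  have hν' : EqOn (fun x => ν x (X x)) (fun x =>
      (∫ t in Ioi 0, pullback φ (fun y => (ω y).comp (Ps y)) t x) (X x) -
      (∫ t in Ioi 0, pullback (fun t => φ (-t)) (fun y => (ω y).comp (Pu y)) t x) (X x) -
      η x * ψ x) K := by
    intro x hx
    obtain ⟨hsX, huX, -, hX⟩ := hproj x hx (X x)
    have hεX : εc x (X x) = η x := apply_eq_of_add_add_smul_eq (ε := (εc x : E →ₗ[ℝ] ℝ))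
      (hεc x hx).1 (hεc x hx).2.1 (hεc x hx).2.2 hsX huX (by rw [← hη x hx, hX])
    simp only [hν x hx, sub_apply, smul_apply, hεX, smul_eq_mul, mul_comm (ψ x)]
    rfl
  have hKm := hKc.measurableSet
  rw [setIntegral_congr_fun hKm hv', setIntegral_congr_fun hKm hν', integral_sub hAs hAu, hs, hu,
    integral_sub _ hηψ, integral_sub hBs hBu]
  exact hBs.sub hBu

theorem adjoint_duality_flow
    {E : Type*} [NormedAddCommGroup E] [NormedSpace ℝ E] [FiniteDimensional ℝ E]
    (F : E → E) (hF : ContDiff ℝ 2 F)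
    (φ : ℝ → E → E)
    (hφ0 : ∀ x : E, φ 0 x = x)
    (hφadd : ∀ (s t : ℝ) (x : E), φ (s + t) x = φ s (φ t x))
    (hφode : ∀ (x : E) (t : ℝ), HasDerivAt (fun s => φ s x) (F (φ t x)) t)
    (hφC1 : ∀ t : ℝ, ContDiff ℝ 1 (φ t))
    (hφD : Continuous fun p : ℝ × E => fderiv ℝ (φ p.1) p.2)
    (K : Set E) (hKc : IsCompact K) (hφK : ∀ t : ℝ, φ t '' K = K)
    (hFne : ∀ x ∈ K, F x ≠ 0)
    (Vs Vu Vc : E → Submodule ℝ E)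
    (hVc : ∀ x ∈ K, Vc x = Submodule.span ℝ {F x})
    (hequivs : ∀ (t : ℝ), ∀ x ∈ K, (Vs x).map (fderiv ℝ (φ t) x : E →ₗ[ℝ] E) = Vs (φ t x))
    (hequivu : ∀ (t : ℝ), ∀ x ∈ K, (Vu x).map (fderiv ℝ (φ t) x : E →ₗ[ℝ] E) = Vu (φ t x))
    (hequivc : ∀ (t : ℝ), ∀ x ∈ K, (Vc x).map (fderiv ℝ (φ t) x : E →ₗ[ℝ] E) = Vc (φ t x))
    (C lam : ℝ) (hC : 0 < C) (hlam0 : 0 < lam) (hlam1 : lam < 1)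
    (hyps : ∀ t : ℝ, 0 ≤ t → ∀ x ∈ K, ∀ v ∈ Vs x, ‖fderiv ℝ (φ t) x v‖ ≤ C * lam ^ t * ‖v‖)
    (hypu : ∀ t : ℝ, 0 ≤ t → ∀ x ∈ K, ∀ v ∈ Vu x, ‖fderiv ℝ (φ (-t)) x v‖ ≤ C * lam ^ t * ‖v‖)
    (Ps Pu Pc : E → E →L[ℝ] E)
    (hproj : ∀ x ∈ K, ∀ v : E, Ps x v ∈ Vs x ∧ Pu x v ∈ Vu x ∧ Pc x v ∈ Vc x ∧
      Ps x v + Pu x v + Pc x v = v)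
    (hdirect : ∀ x ∈ K, ∀ vs ∈ Vs x, ∀ vu ∈ Vu x, ∀ vc ∈ Vc x,
      vs + vu + vc = 0 → vs = 0 ∧ vu = 0 ∧ vc = 0)
    (hPbdd : ∃ M : ℝ, ∀ x ∈ K, ‖Ps x‖ + ‖Pu x‖ + ‖Pc x‖ ≤ M)
    (εc : E → E →L[ℝ] ℝ)
    (hεc : ∀ x ∈ K, (∀ v ∈ Vs x, εc x v = 0) ∧ (∀ v ∈ Vu x, εc x v = 0) ∧ εc x (F x) = 1)
    [MeasurableSpace E] [BorelSpace E]
    (ρ : Measure E) [IsProbabilityMeasure ρ] (hρK : ρ K = 1)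
    (hρinv : ∀ (t : ℝ) (A : Set E), MeasurableSet A → ρ (φ t ⁻¹' A) = ρ A)
    (hPsc : ContinuousOn Ps K) (hPuc : ContinuousOn Pu K) (hPcc : ContinuousOn Pc K)
    (ω : E → E →L[ℝ] ℝ) (hωc : ContinuousOn ω K)
    (ψ : E → ℝ) (hψc : ContinuousOn ψ K)
    (hψ : ∀ x₀ ∈ K, ∀ t : ℝ,
      HasDerivAt (fun s => ψ (φ s x₀)) (ω (φ t x₀) (F (φ t x₀))) t)
    (X : E → E) (hXc : ContinuousOn X K)
    (η : E → ℝ) (hη : ∀ x ∈ K, Pc x (X x) = η x • F x)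
    (v : E → E)
    (hv : ∀ x ∈ K, v x =
      (∫ t in Ioi (0:ℝ), fderiv ℝ (φ t) (φ (-t) x) (Ps (φ (-t) x) (X (φ (-t) x)))) -
      ∫ t in Ioi (0:ℝ), fderiv ℝ (φ (-t)) (φ t x) (Pu (φ t x) (X (φ t x))))
    (ν : E → E →L[ℝ] ℝ)
    (hν : ∀ x ∈ K, ν x =
      (∫ t in Ioi (0:ℝ), ((ω (φ t x)).comp (Ps (φ t x))).comp (fderiv ℝ (φ t) x)) -
      (∫ t in Ioi (0:ℝ), ((ω (φ (-t) x)).comp (Pu (φ (-t) x))).comp (fderiv ℝ (φ (-t)) x)) -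
      ψ x • εc x) :
    (∫ x in K, ω x (v x) ∂ρ) - (∫ x in K, η x * ψ x ∂ρ) = ∫ x in K, ν x (X x) ∂ρ :=
  adjoint_duality_flow_general F hF φ hφ0 hφadd hφode hφC1 hφD K hKc hφK hFne Vs Vu Vc hequivs
    hequivu hequivc C lam hC hlam0 hlam1 hyps hypu Ps Pu Pc hproj hdirect εc hεc ρ hρinv hPsc hPuc
    hPcc ω hωc ψ hψc X hXc η hη v hv ν hν
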